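/- arXiv:1310.5704 — 2 statements merged into one kernel-verified Lean document; each statement's English description precedes it below -/
import Mathlib

section
/- For F(t,x₀,x₁,x₂) = 24 x₂³/(−3+√(9−2x₁x₂))³ + 12 x₁x₂⁴/(−3+√(9−2x₁x₂))⁴ (on the open set where 9 − 2x₁x₂ > 0 and −3+√(9−2x₁x₂) ≠ 0), the W\u00fcnschmann invariant W vanishes identically. -/
noncomputable section

/-- ℝ⁴ with coordinates (t, x₀, x₁, x₂). -/
abbrev R4 := ℝ × ℝ × ℝ × ℝ

/-- The total derivative vector field X_F = ∂_t + x₁∂_{x₀} + x₂∂_{x₁} + F∂_{x₂}. -/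
def XFvec (F : R4 → ℝ) (p : R4) : R4 := (1, p.2.2.1, p.2.2.2, F p)

/-- X_F acting as a derivation on functions. -/
def XF (F : R4 → ℝ) (f : R4 → ℝ) (p : R4) : ℝ := fderiv ℝ f p (XFvec F p)

/-- Directional (partial) derivative in the direction `v`. -/
def pd (v : R4) (f : R4 → ℝ) (p : R4) : ℝ := fderiv ℝ f p v

def e0 : R4 := (0, 1, 0, 0)  -- ∂_{x₀}
def e1 : R4 := (0, 0, 1, 0)  -- ∂_{x₁}
def e2 : R4 := (0, 0, 0, 1)  -- ∂_{x₂}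

/-- K₁ = ∂_{x₁}F − X_F(∂_{x₂}F) + (1/3)(∂_{x₂}F)². -/
def K1 (F : R4 → ℝ) : R4 → ℝ := fun p =>
  pd e1 F p - XF F (pd e2 F) p + (1/3) * (pd e2 F p)^2

/-- K₀ = ∂_{x₀}F − X_F(∂_{x₁}F) + (1/3)∂_{x₁}F∂_{x₂}F + (2/3)X_F²(∂_{x₂}F)
        − (2/3)X_F(∂_{x₂}F)∂_{x₂}F + (2/27)(∂_{x₂}F)³. -/
def K0 (F : R4 → ℝ) : R4 → ℝ := fun p =>
  pd e0 F p - XF F (pd e1 F) p + (1/3) * pd e1 F p * pd e2 F p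
    + (2/3) * XF F (XF F (pd e2 F)) p - (2/3) * XF F (pd e2 F) p * pd e2 F p
    + (2/27) * (pd e2 F p)^3

/-- The Wünschmann invariant. -/
def Wun (F : R4 → ℝ) : R4 → ℝ := fun p =>
  pd e0 F p - (1/2) * XF F (pd e1 F) p + (1/3) * pd e1 F p * pd e2 F p
    + (1/6) * XF F (XF F (pd e2 F)) p - (1/3) * XF F (pd e2 F) p * pd e2 F p
    + (2/27) * (pd e2 F p)^3

/-- The Cartan invariant C = X_F²(∂²_{x₂}F) − X_F(∂_{x₁}∂_{x₂}F) + ∂_{x₀}∂_{x₂}F. -/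
def CartanC (F : R4 → ℝ) : R4 → ℝ := fun p =>
  XF F (XF F (pd e2 (pd e2 F))) p - XF F (pd e1 (pd e2 F)) p + pd e0 (pd e2 F) p

/-- The dKP-type example: F = 24x₂³/(−3+√(9−2x₁x₂))³ + 12x₁x₂⁴/(−3+√(9−2x₁x₂))⁴. -/
def FdKP : R4 → ℝ := fun q =>
  24 * q.2.2.2^3 / (-3 + Real.sqrt (9 - 2 * q.2.2.1 * q.2.2.2))^3
    + 12 * q.2.2.1 * q.2.2.2^4 / (-3 + Real.sqrt (9 - 2 * q.2.2.1 * q.2.2.2))^4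

/-!
On the domain put `s = √(9 - 2x₁x₂)`, so that `x₁ = (9 - s²)/(2x₂)`. Then
`F = -6x₂³(s - 1)/(s - 3)³ = -6x₂³/(s - 3)² - 12x₂³/(s - 3)³` is a combination of the functions
`x₂ⁿ/(s - 3)ᵐ`, whose derivatives follow from `∂s/∂x₁ = -x₂/s` and `∂s/∂x₂ = -x₁/s`. This gives
`∂_{x₀}F = 0`, `∂_{x₁}F = -12x₂⁴/(s - 3)⁴`, `∂_{x₂}F = -12x₂²/(s - 3)²` and
`X_F(∂_{x₂}F) = -4 ∂_{x₁}F`, after which `W` is a rational function of `x₂` and `s` that vanishes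
identically.
-/

open Filter Topology

theorem Filter.EventuallyEq.XF_eq {F f g : R4 → ℝ} {p : R4} (h : f =ᶠ[𝓝 p] g) :
    XF F f p = XF F g p := by
  rw [XF, XF, h.fderiv_eq]

namespace DKP

def sqrtDisc (q : R4) : ℝ := Real.sqrt (9 - 2 * q.2.2.1 * q.2.2.2)

def domain : Set R4 := {q | 0 < 9 - 2 * q.2.2.1 * q.2.2.2 ∧ q.2.2.1 * q.2.2.2 ≠ 0}

def monomial (n m : ℕ) (q : R4) : ℝ := q.2.2.2 ^ n / (sqrtDisc q - 3) ^ m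

def coordX₁ : R4 →L[ℝ] ℝ :=
  (ContinuousLinearMap.fst ℝ ℝ ℝ).comp
    ((ContinuousLinearMap.snd ℝ ℝ (ℝ × ℝ)).comp (ContinuousLinearMap.snd ℝ ℝ (ℝ × ℝ × ℝ)))

def coordX₂ : R4 →L[ℝ] ℝ :=
  (ContinuousLinearMap.snd ℝ ℝ ℝ).comp
    ((ContinuousLinearMap.snd ℝ ℝ (ℝ × ℝ)).comp (ContinuousLinearMap.snd ℝ ℝ (ℝ × ℝ × ℝ)))

@[simp] theorem coordX₁_apply (v : R4) : coordX₁ v = v.2.2.1 := rfl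

@[simp] theorem coordX₂_apply (v : R4) : coordX₂ v = v.2.2.2 := rfl

theorem isOpen_domain : IsOpen domain :=
  (isOpen_lt (f := fun _ => 0) (g := fun q : R4 => 9 - 2 * q.2.2.1 * q.2.2.2) (by fun_prop)
    (by fun_prop)).inter
    (isOpen_ne_fun (f := fun q : R4 => q.2.2.1 * q.2.2.2) (by fun_prop) continuous_const)

theorem mem_domain {p : R4} (h : 0 < 9 - 2 * p.2.2.1 * p.2.2.2)
    (hs : -3 + Real.sqrt (9 - 2 * p.2.2.1 * p.2.2.2) ≠ 0) : p ∈ domain := by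
  refine ⟨h, fun h0 => hs ?_⟩
  rw [mul_assoc, h0, mul_zero, sub_zero, show (9 : ℝ) = 3 ^ 2 by norm_num,
    Real.sqrt_sq zero_le_three]
  norm_num

section

variable {p : R4} (hp : p ∈ domain)
include hp

theorem sqrtDisc_pos : 0 < sqrtDisc p := Real.sqrt_pos.2 hp.1

theorem sqrtDisc_sq : sqrtDisc p ^ 2 = 9 - 2 * p.2.2.1 * p.2.2.2 := Real.sq_sqrt hp.1.le

theorem sqrtDisc_sub_three_ne_zero : sqrtDisc p - 3 ≠ 0 := by
  intro h
  have hsq := sqrtDisc_sq hp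
  rw [sub_eq_zero.1 h] at hsq
  exact hp.2 (by linarith)

theorem x₂_ne_zero : p.2.2.2 ≠ 0 := right_ne_zero_of_mul hp.2

theorem x₁_eq : p.2.2.1 = (9 - sqrtDisc p ^ 2) / (2 * p.2.2.2) := by
  rw [sqrtDisc_sq hp]
  field_simp [x₂_ne_zero hp]
  ring

theorem hasFDerivAt_sqrtDisc :
    HasFDerivAt sqrtDisc
      ((-p.2.2.2 / sqrtDisc p) • coordX₁ + (-p.2.2.1 / sqrtDisc p) • coordX₂) p := by
  have hdisc := (((coordX₁.hasFDerivAt (x := p)).const_mul 2).mul coordX₂.hasFDerivAt).const_sub 9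
  refine (hdisc.sqrt hp.1.ne').congr_fderiv (ContinuousLinearMap.ext fun v => ?_)
  have := (sqrtDisc_pos hp).ne'
  simp only [sqrtDisc] at this ⊢
  simp only [one_div, mul_inv_rev, neg_add_rev, smul_add, smul_neg, add_apply,
    neg_apply, smul_apply, coordX₂_apply, smul_eq_mul, coordX₁_apply, Pi.mul_apply]
  field_simp

theorem hasFDerivAt_monomial (n m : ℕ) :
    HasFDerivAt (monomial n m)
      ((m * p.2.2.2 ^ (n + 1) / (sqrtDisc p * (sqrtDisc p - 3) ^ (m + 1))) • coordX₁ +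
        (n * p.2.2.2 ^ (n - 1) / (sqrtDisc p - 3) ^ m +
          m * p.2.2.1 * p.2.2.2 ^ n / (sqrtDisc p * (sqrtDisc p - 3) ^ (m + 1))) • coordX₂) p := by
  have hne := sqrtDisc_sub_three_ne_zero hp
  have h := (coordX₂.hasFDerivAt.pow n).mul <| (hasDerivAt_inv (pow_ne_zero m hne)).comp_hasFDerivAt
    p (((hasFDerivAt_sqrtDisc hp).sub_const 3).pow m)
  have hfun : monomial n m = fun q => coordX₂ q ^ n * ((sqrtDisc q - 3) ^ m)⁻¹ := by
    ext q; simp [monomial, div_eq_mul_inv]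
  rw [hfun]
  refine h.congr_fderiv (ContinuousLinearMap.ext fun v => ?_)
  have := (sqrtDisc_pos hp).ne'
  rcases m with _ | m
  · simp
  simp only [coordX₂_apply, add_tsub_cancel_right, nsmul_eq_mul, Nat.cast_add, Nat.cast_one,
    smul_add, neg_smul, smul_neg, Function.comp_apply, add_apply,
    neg_apply, smul_apply, coordX₁_apply, smul_eq_mul]
  field_simp
  ring

theorem XF_const_mul_monomial (F : R4 → ℝ) (c : ℝ) (n m : ℕ) :
    XF F (fun q => c * monomial n m q) p =
      c * (m * p.2.2.2 ^ (n + 2) / (sqrtDisc p * (sqrtDisc p - 3) ^ (m + 1)) +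
        (n * p.2.2.2 ^ (n - 1) / (sqrtDisc p - 3) ^ m +
          m * p.2.2.1 * p.2.2.2 ^ n / (sqrtDisc p * (sqrtDisc p - 3) ^ (m + 1))) * F p) := by
  simp only [XF, XFvec, ((hasFDerivAt_monomial hp n m).const_mul c).fderiv, smul_add,
    add_apply, smul_apply, coordX₁_apply, coordX₂_apply,
    smul_eq_mul]
  ring

theorem FdKP_eq_monomial : FdKP p = -6 * monomial 3 2 p - 12 * monomial 3 3 p := by
  have hne := sqrtDisc_sub_three_ne_zero hp
  have hne' : -3 + sqrtDisc p ≠ 0 := by rwa [neg_add_eq_sub]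
  simp only [FdKP, monomial]
  rw [← sqrtDisc, x₁_eq hp]
  field_simp [x₂_ne_zero hp]
  ring

theorem hasFDerivAt_FdKP :
    HasFDerivAt FdKP
      ((-12 * monomial 4 4 p) • coordX₁ + (-12 * monomial 2 2 p) • coordX₂) p := by
  have h := ((hasFDerivAt_monomial hp 3 2).const_mul (-6)).sub
    ((hasFDerivAt_monomial hp 3 3).const_mul 12)
  refine (h.congr_of_eventuallyEq ?_).congr_fderiv (ContinuousLinearMap.ext fun v => ?_)
  · exact (isOpen_domain.eventually_mem hp).mono fun q hq => FdKP_eq_monomial hq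
  have := (sqrtDisc_pos hp).ne'
  have := sqrtDisc_sub_three_ne_zero hp
  simp only [Nat.cast_ofNat, Nat.reduceAdd, Nat.add_one_sub_one, smul_add, neg_smul,
    sub_apply, add_apply, neg_apply,
    smul_apply, coordX₁_apply, smul_eq_mul, coordX₂_apply, monomial, neg_mul]
  rw [x₁_eq hp]
  field_simp [x₂_ne_zero hp]
  ring

theorem pd_FdKP (v : R4) :
    pd v FdKP p = -12 * monomial 4 4 p * v.2.2.1 - 12 * monomial 2 2 p * v.2.2.2 := by
  simp only [pd, (hasFDerivAt_FdKP hp).fderiv, add_apply,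
    smul_apply, coordX₁_apply, coordX₂_apply, smul_eq_mul]
  ring

theorem pd_e1_FdKP_eventuallyEq : pd e1 FdKP =ᶠ[𝓝 p] fun q => -12 * monomial 4 4 q :=
  (isOpen_domain.eventually_mem hp).mono fun q hq => by simp [pd_FdKP hq, e1]

theorem pd_e2_FdKP_eventuallyEq : pd e2 FdKP =ᶠ[𝓝 p] fun q => -12 * monomial 2 2 q :=
  (isOpen_domain.eventually_mem hp).mono fun q hq => by simp [pd_FdKP hq, e2]

theorem XF_FdKP_pd_e2 : XF FdKP (pd e2 FdKP) p = 48 * monomial 4 4 p := by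
  have := (sqrtDisc_pos hp).ne'
  have := sqrtDisc_sub_three_ne_zero hp
  rw [(pd_e2_FdKP_eventuallyEq hp).XF_eq, XF_const_mul_monomial hp, FdKP_eq_monomial hp,
    x₁_eq hp]
  simp only [monomial]
  field_simp [x₂_ne_zero hp]
  ring

theorem XF_FdKP_pd_e2_eventuallyEq :
    XF FdKP (pd e2 FdKP) =ᶠ[𝓝 p] fun q => 48 * monomial 4 4 q :=
  (isOpen_domain.eventually_mem hp).mono fun _ => XF_FdKP_pd_e2

end

end DKP

open DKP in
/-- On the domain where 9 − 2x₁x₂ > 0 and −3+√(9−2x₁x₂) ≠ 0, the Wünschmann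
invariant of FdKP vanishes identically. -/
theorem W_vanishes_dKP (p : R4)
    (h1 : 9 - 2 * p.2.2.1 * p.2.2.2 > 0)
    (h2 : -3 + Real.sqrt (9 - 2 * p.2.2.1 * p.2.2.2) ≠ 0) :
    Wun FdKP p = 0 := by
  have hp : p ∈ domain := mem_domain h1 h2
  have := (sqrtDisc_pos hp).ne'
  have := sqrtDisc_sub_three_ne_zero hp
  rw [Wun, (pd_e1_FdKP_eventuallyEq hp).XF_eq, (XF_FdKP_pd_e2_eventuallyEq hp).XF_eq,
    XF_FdKP_pd_e2 hp, XF_const_mul_monomial hp, XF_const_mul_monomial hp, pd_FdKP hp,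
    pd_FdKP hp, pd_FdKP hp, FdKP_eq_monomial hp, x₁_eq hp]
  simp only [e0, e1, e2, monomial]
  field_simp [x₂_ne_zero hp]
  ring
end
end

section
/- The condition that g of the form g = A(t,x₀) + B(t,x₀)x₁ solves the equation −2gX_F²(g) + 3(X_F(g))² = g²K₁, after differentiating both sides three times with respect to x₂, yields ∂_{x₁}g = −Ψg where Ψ = (∂³_{x₂}K₁)/(2∂³_{x₂}F), provided ∂³_{x₂}F ≠ 0. Verify this in the following precise form: for g with ∂_{x₂}g = 0 and ∂_{x₁}(∂_{x₁}g) = 0, the third x₂-derivative of −2gX_F²(g) + 3(X_F(g))² equals −2g∂_{x₁}g·∂³_{x₂}F. -/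
noncomputable section

section helpers

variable {f h a b c d e : R4 → ℝ} {p v w : R4}

lemma pd_contDiff (hf : ContDiff ℝ (⊤ : ℕ∞) f) (v : R4) : ContDiff ℝ (⊤ : ℕ∞) (pd v f) := by
  have h1 : ContDiff ℝ (⊤ : ℕ∞) (fderiv ℝ f) := hf.fderiv_right (by simp)
  exact h1.clm_apply contDiff_const

lemma diffAt (hf : ContDiff ℝ (⊤ : ℕ∞) f) (p : R4) : DifferentiableAt ℝ f p :=
  (hf.differentiable (by simp)).differentiableAt

lemma pd_mul (hf : DifferentiableAt ℝ f p) (hh : DifferentiableAt ℝ h p) (v : R4) :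
    pd v (fun q => f q * h q) p = pd v f p * h p + f p * pd v h p := by
  simp only [pd, fderiv_fun_mul hf hh, ContinuousLinearMap.add_apply,
    ContinuousLinearMap.smul_apply, smul_eq_mul]
  ring

lemma pd_add (hf : DifferentiableAt ℝ f p) (hh : DifferentiableAt ℝ h p) (v : R4) :
    pd v (fun q => f q + h q) p = pd v f p + pd v h p := by
  simp only [pd, fderiv_fun_add hf hh, ContinuousLinearMap.add_apply]

lemma pd_const_mul (hf : DifferentiableAt ℝ f p) (c : ℝ) (v : R4) :
    pd v (fun q => c * f q) p = c * pd v f p := by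
  simp only [pd, fderiv_const_mul hf c, ContinuousLinearMap.smul_apply, smul_eq_mul]

lemma pd_comm (hf : ContDiff ℝ (⊤ : ℕ∞) f) (v w : R4) (p : R4) :
    pd v (pd w f) p = pd w (pd v f) p := by
  have hd : ContDiff ℝ (⊤ : ℕ∞) (fderiv ℝ f) := hf.fderiv_right (by simp)
  have key : ∀ a b : R4, pd a (pd b f) p = fderiv ℝ (fderiv ℝ f) p a b := by
    intro a b
    have : pd b f = fun q => (fderiv ℝ f q) b := rfl
    rw [pd, this, fderiv_clm_apply ((hd.differentiable (by simp)).differentiableAt)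
      (differentiableAt_const b)]
    simp
  rw [key, key]
  exact (hf.contDiffAt.isSymmSndFDerivAt (by rw [minSmoothness_of_isRCLikeNormedField]; exact WithTop.coe_le_coe.mpr le_top)) v w

lemma contDiff_x1 : ContDiff ℝ (⊤ : ℕ∞) (fun q : R4 => q.2.2.1) :=
  contDiff_fst.comp (contDiff_snd.comp contDiff_snd)

lemma contDiff_x2 : ContDiff ℝ (⊤ : ℕ∞) (fun q : R4 => q.2.2.2) :=
  contDiff_snd.comp (contDiff_snd.comp contDiff_snd)

def x1CLM : R4 →L[ℝ] ℝ :=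
  (ContinuousLinearMap.fst ℝ ℝ ℝ).comp
    ((ContinuousLinearMap.snd ℝ ℝ (ℝ × ℝ)).comp (ContinuousLinearMap.snd ℝ ℝ (ℝ × ℝ × ℝ)))

def x2CLM : R4 →L[ℝ] ℝ :=
  (ContinuousLinearMap.snd ℝ ℝ ℝ).comp
    ((ContinuousLinearMap.snd ℝ ℝ (ℝ × ℝ)).comp (ContinuousLinearMap.snd ℝ ℝ (ℝ × ℝ × ℝ)))

lemma pd_x1 (v p : R4) : pd v (fun q : R4 => q.2.2.1) p = v.2.2.1 := by
  have : (fun q : R4 => q.2.2.1) = fun q => x1CLM q := rfl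
  rw [pd, this, (x1CLM.hasFDerivAt (x := p)).fderiv]
  rfl

lemma pd_x2 (v p : R4) : pd v (fun q : R4 => q.2.2.2) p = v.2.2.2 := by
  have : (fun q : R4 => q.2.2.2) = fun q => x2CLM q := rfl
  rw [pd, this, (x2CLM.hasFDerivAt (x := p)).fderiv]
  rfl

lemma XF_eq (F f : R4 → ℝ) (p : R4) :
    XF F f p = pd (1,0,0,0) f p + p.2.2.1 * pd e0 f p + p.2.2.2 * pd e1 f p
      + F p * pd e2 f p := by
  have hv : XFvec F p = ((1:ℝ),(0:ℝ),(0:ℝ),(0:ℝ)) + p.2.2.1 • e0 + p.2.2.2 • e1 + F p • e2 := by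
    simp [XFvec, e0, e1, e2, Prod.ext_iff]
  rw [XF, hv]
  simp only [map_add, map_smul, smul_eq_mul]
  rfl

lemma pd_e2_pd (hf : ContDiff ℝ (⊤ : ℕ∞) f) (hf2 : ∀ q, pd e2 f q = 0) (v p : R4) :
    pd e2 (pd v f) p = 0 := by
  rw [pd_comm hf e2 v p]
  have : pd e2 f = fun _ : R4 => (0:ℝ) := funext hf2
  rw [this]
  simp [pd]

lemma pd_comb4 (ha : ContDiff ℝ (⊤ : ℕ∞) a) (hb : ContDiff ℝ (⊤ : ℕ∞) b) (hc : ContDiff ℝ (⊤ : ℕ∞) c)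
    (hd : ContDiff ℝ (⊤ : ℕ∞) d) (he : ContDiff ℝ (⊤ : ℕ∞) e) (v p : R4) :
    pd v (fun q : R4 => a q + q.2.2.1 * b q + q.2.2.2 * c q + d q * e q) p
      = pd v a p + v.2.2.1 * b p + p.2.2.1 * pd v b p + v.2.2.2 * c p + p.2.2.2 * pd v c p
        + pd v d p * e p + d p * pd v e p := by
  have dx1 : DifferentiableAt ℝ (fun q : R4 => q.2.2.1) p := diffAt contDiff_x1 p
  have dx2 : DifferentiableAt ℝ (fun q : R4 => q.2.2.2) p := diffAt contDiff_x2 p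
  rw [pd_add (((diffAt ha p).fun_add (dx1.fun_mul (diffAt hb p))).fun_add (dx2.fun_mul (diffAt hc p)))
      ((diffAt hd p).fun_mul (diffAt he p)),
    pd_add ((diffAt ha p).fun_add (dx1.fun_mul (diffAt hb p))) (dx2.fun_mul (diffAt hc p)),
    pd_add (diffAt ha p) (dx1.fun_mul (diffAt hb p)),
    pd_mul dx1 (diffAt hb p), pd_mul dx2 (diffAt hc p),
    pd_mul (diffAt hd p) (diffAt he p), pd_x1, pd_x2]
  ring

lemma pd_comb3 (ha : ContDiff ℝ (⊤ : ℕ∞) a) (hb : ContDiff ℝ (⊤ : ℕ∞) b)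
    (hd : ContDiff ℝ (⊤ : ℕ∞) d) (he : ContDiff ℝ (⊤ : ℕ∞) e) (v p : R4) :
    pd v (fun q : R4 => a q + q.2.2.1 * b q + d q * e q) p
      = pd v a p + v.2.2.1 * b p + p.2.2.1 * pd v b p + pd v d p * e p + d p * pd v e p := by
  have dx1 : DifferentiableAt ℝ (fun q : R4 => q.2.2.1) p := diffAt contDiff_x1 p
  rw [pd_add ((diffAt ha p).fun_add (dx1.fun_mul (diffAt hb p))) ((diffAt hd p).fun_mul (diffAt he p)),
    pd_add (diffAt ha p) (dx1.fun_mul (diffAt hb p)),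
    pd_mul dx1 (diffAt hb p), pd_mul (diffAt hd p) (diffAt he p), pd_x1]
  ring

lemma pd_comb2 (c1 c2 : ℝ) (ha : ContDiff ℝ (⊤ : ℕ∞) a) (hb : ContDiff ℝ (⊤ : ℕ∞) b)
    (hc : ContDiff ℝ (⊤ : ℕ∞) c) (hd : ContDiff ℝ (⊤ : ℕ∞) d) (v p : R4) :
    pd v (fun q : R4 => c1 * a q * b q + c2 * c q * d q) p
      = c1 * (pd v a p * b p + a p * pd v b p) + c2 * (pd v c p * d p + c p * pd v d p) := by
  have h1 : DifferentiableAt ℝ (fun q : R4 => c1 * a q) p := (diffAt ha p).const_mul c1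
  have h2 : DifferentiableAt ℝ (fun q : R4 => c2 * c q) p := (diffAt hc p).const_mul c2
  rw [pd_add (h1.fun_mul (diffAt hb p)) (h2.fun_mul (diffAt hd p)),
    pd_mul h1 (diffAt hb p), pd_mul h2 (diffAt hd p),
    pd_const_mul (diffAt ha p) c1, pd_const_mul (diffAt hc p) c2]
  ring

end helpers

/-- For g = A + Bx₁ (i.e. ∂_{x₂}g = 0 and ∂²_{x₁}g = 0), differentiating
−2gX_F²(g) + 3(X_F(g))² three times with respect to x₂ yields −2g·∂_{x₁}g·∂³_{x₂}F. -/
theorem third_x2_derivative_schwarzian (F g : R4 → ℝ)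
    (hF : ContDiff ℝ (⊤ : ℕ∞) F) (hg : ContDiff ℝ (⊤ : ℕ∞) g)
    (h2 : ∀ p, pd e2 g p = 0)
    (h11 : ∀ p, pd e1 (pd e1 g) p = 0) (p : R4) :
    pd e2 (pd e2 (pd e2 (fun q => -2 * g q * XF F (XF F g) q + 3 * (XF F g q)^2))) p
      = -2 * g p * pd e1 g p * pd e2 (pd e2 (pd e2 F)) p := by
  set et : R4 := (1,0,0,0) with het
  -- basic pieces
  have hg1 : ContDiff ℝ (⊤ : ℕ∞) (pd e1 g) := pd_contDiff hg e1
  have hg0 : ContDiff ℝ (⊤ : ℕ∞) (pd e0 g) := pd_contDiff hg e0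
  have hgt : ContDiff ℝ (⊤ : ℕ∞) (pd et g) := pd_contDiff hg et
  have pd2g : ∀ v q, pd e2 (pd v g) q = 0 := fun v q => pd_e2_pd hg h2 v q
  have pd2g2 : ∀ v w q, pd e2 (pd v (pd w g)) q = 0 := fun v w q =>
    pd_e2_pd (pd_contDiff hg w) (pd2g w) v q
  -- H = XF g
  set H : R4 → ℝ := fun q => pd et g q + q.2.2.1 * pd e0 g q + q.2.2.2 * pd e1 g q with hHdef
  have hH : XF F g = H := by
    funext q
    rw [XF_eq, h2 q, hHdef]
    ring
  have hHsm : ContDiff ℝ (⊤ : ℕ∞) H :=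
    (hgt.add (contDiff_x1.mul hg0)).add (contDiff_x2.mul hg1)
  -- pd e2 H = pd e1 g
  have hA : ∀ q, pd e2 H q = pd e1 g q := by
    intro q
    have he : pd e2 H q = pd e2 (fun q : R4 => pd et g q + q.2.2.1 * pd e0 g q
        + q.2.2.2 * pd e1 g q + (fun _ : R4 => (0:ℝ)) q * (fun _ : R4 => (0:ℝ)) q) q := by
      congr 1; funext r; simp [hHdef]
    rw [he, pd_comb4 hgt hg0 hg1 contDiff_const contDiff_const]
    simp only [pd2g, show e2.2.2.1 = (0:ℝ) from rfl, show e2.2.2.2 = (1:ℝ) from rfl]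
    ring
  have hAe : pd e2 H = pd e1 g := funext hA
  -- pd e2 (pd v H) = pd v (pd e1 g)
  have hC : ∀ v q, pd e2 (pd v H) q = pd v (pd e1 g) q := by
    intro v q
    rw [pd_comm hHsm e2 v q, hAe]
  -- pd e1 H
  have hB : ∀ q, pd e1 H q = pd et (pd e1 g) q + pd e0 g q + q.2.2.1 * pd e0 (pd e1 g) q := by
    intro q
    have he : pd e1 H q = pd e1 (fun q : R4 => pd et g q + q.2.2.1 * pd e0 g q
        + q.2.2.2 * pd e1 g q + (fun _ : R4 => (0:ℝ)) q * (fun _ : R4 => (0:ℝ)) q) q := by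
      congr 1; funext r; simp [hHdef]
    rw [he, pd_comb4 hgt hg0 hg1 contDiff_const contDiff_const,
      pd_comm hg e1 et q, pd_comm hg e1 e0 q, h11 q]
    simp only [show e1.2.2.1 = (1:ℝ) from rfl, show e1.2.2.2 = (0:ℝ) from rfl]
    ring
  -- Z = XF F H
  set Z : R4 → ℝ := fun q => pd et H q + q.2.2.1 * pd e0 H q + q.2.2.2 * pd e1 H q
      + F q * pd e2 H q with hZdef
  have hZ : XF F H = Z := by
    funext q
    rw [XF_eq, hZdef]
  have hZsm : ContDiff ℝ (⊤ : ℕ∞) Z :=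
    (((pd_contDiff hHsm et).add (contDiff_x1.mul (pd_contDiff hHsm e0))).add
      (contDiff_x2.mul (pd_contDiff hHsm e1))).add (hF.mul (pd_contDiff hHsm e2))
  -- W = pd e2 Z
  set W : R4 → ℝ := fun q => (2 * pd et (pd e1 g) q + pd e0 g q)
      + q.2.2.1 * (2 * pd e0 (pd e1 g) q) + pd e2 F q * pd e1 g q with hWdef
  have hWsm : ContDiff ℝ (⊤ : ℕ∞) W :=
    (((contDiff_const.mul (pd_contDiff hg1 et)).add hg0).add
      (contDiff_x1.mul (contDiff_const.mul (pd_contDiff hg1 e0)))).add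
      ((pd_contDiff hF e2).mul hg1)
  have hDZ : ∀ q, pd e2 Z q = W q := by
    intro q
    rw [hZdef, pd_comb4 (pd_contDiff hHsm et) (pd_contDiff hHsm e0) (pd_contDiff hHsm e1)
        hF (pd_contDiff hHsm e2),
      hC et q, hC e0 q, hC e1 q, hC e2 q, hB q, hA q, h11 q, pd2g e1 q, hWdef]
    simp only [show e2.2.2.1 = (0:ℝ) from rfl, show e2.2.2.2 = (1:ℝ) from rfl, pd2g]
    ring
  -- pd e2 W
  have hDW : ∀ q, pd e2 W q = pd e2 (pd e2 F) q * pd e1 g q := by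
    intro q
    have da : DifferentiableAt ℝ (fun r : R4 => 2 * pd et (pd e1 g) r) q :=
      (diffAt (pd_contDiff hg1 et) q).const_mul 2
    rw [hWdef, pd_comb3 ((contDiff_const.mul (pd_contDiff hg1 et)).add hg0)
        (contDiff_const.mul (pd_contDiff hg1 e0)) (pd_contDiff hF e2) hg1,
      pd_add da (diffAt hg0 q), pd_const_mul (diffAt (pd_contDiff hg1 et) q) 2,
      pd_const_mul (diffAt (pd_contDiff hg1 e0) q) 2]
    simp only [show e2.2.2.1 = (0:ℝ) from rfl, pd2g, pd2g2]
    ring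
  -- the chain of three x₂-derivatives
  have hSeq : (fun q => -2 * g q * XF F (XF F g) q + 3 * (XF F g q)^2)
      = (fun q : R4 => -2 * g q * Z q + 3 * H q * H q) := by
    funext q
    rw [hH, hZ]
    ring
  set S2 : R4 → ℝ := fun q => -2 * g q * W q + 6 * H q * pd e1 g q with hS2def
  have hS2 : pd e2 (fun q : R4 => -2 * g q * Z q + 3 * H q * H q) = S2 := by
    funext q
    rw [pd_comb2 (-2) 3 hg hZsm hHsm hHsm, h2 q, hDZ q, hA q, hS2def]
    ring
  set S3 : R4 → ℝ := fun q => -2 * g q * (pd e2 (pd e2 F) q * pd e1 g q)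
      + 6 * pd e1 g q * pd e1 g q with hS3def
  have hS3 : pd e2 S2 = S3 := by
    funext q
    rw [hS2def, pd_comb2 (-2) 6 hg hWsm hHsm hg1, h2 q, hDW q, hA q, pd2g e1 q, hS3def]
    ring
  have hbsm : ContDiff ℝ (⊤ : ℕ∞) (fun q : R4 => pd e2 (pd e2 F) q * pd e1 g q) :=
    (pd_contDiff (pd_contDiff hF e2) e2).mul hg1
  have hS4 : pd e2 S3 p = -2 * g p * pd e1 g p * pd e2 (pd e2 (pd e2 F)) p := by
    rw [hS3def, pd_comb2 (-2) 6 hg hbsm hg1 hg1, h2 p, pd2g e1 p,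
      pd_mul (diffAt (pd_contDiff (pd_contDiff hF e2) e2) p) (diffAt hg1 p) e2,
      pd2g e1 p]
    ring
  rw [hSeq, hS2, hS3, hS4]
end
end
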